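/- Generalized pairing lemma: consider a Maker-Breaker domination game on a graph G, and suppose at some moment Dominator has claimed the vertex set X and Staller the vertex set Y. If there exists a matching M in G − (X ∪ Y) such that every vertex of G not covered by M lies in N_G[X], then Dominator has a strategy to win the continuation of the game regardless of who moves next, using at most |X| + |M| moves in total. -/

import Mathlib

open SimpleGraph

namespace MBD

variable {V : Type*}

/-- Dominator's claimed set `D` is a dominating set of `G`. -/
def Dominates (G : SimpleGraph V) (D : Finset V) : Prop :=
  ∀ v : V, ∃ d ∈ D, d = v ∨ G.Adj d v

/-- Staller's claimed set `S` contains the whole closed neighborhood of some vertex. -/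
def StallerWinSet (G : SimpleGraph V) (S : Finset V) : Prop :=
  ∃ v : V, ∀ u : V, (u = v ∨ G.Adj u v) → u ∈ S

variable [DecidableEq V]

mutual
  /-- `DomD G k D S`: with Dominator having claimed `D`, Staller `S`, and Dominator to
  move, Dominator has a strategy winning the Maker-Breaker domination game on `G`
  using at most `k` further moves of his own. -/
  inductive DomD (G : SimpleGraph V) : ℕ → Finset V → Finset V → Prop
    | win {k : ℕ} {D S : Finset V} : Dominates G D → DomD G k D S
    | move {k : ℕ} {D S : Finset V} (v : V) : v ∉ D → v ∉ S →
        DomS G k (insert v D) S → DomD G (k + 1) D S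
  /-- Like `DomD`, but it is Staller's turn to move. -/
  inductive DomS (G : SimpleGraph V) : ℕ → Finset V → Finset V → Prop
    | win {k : ℕ} {D S : Finset V} : Dominates G D → DomS G k D S
    | move {k : ℕ} {D S : Finset V} : (∃ v : V, v ∉ D ∧ v ∉ S) →
        (∀ v : V, v ∉ D → v ∉ S → DomD G k D (insert v S)) → DomS G k D S
end

mutual
  /-- `StallD G k D S`: with Dominator having claimed `D`, Staller `S`, and Dominator to
  move, Staller has a strategy winning (claiming a whole closed neighborhood) within at
  most `k` further moves of her own. -/
  inductive StallD (G : SimpleGraph V) : ℕ → Finset V → Finset V → Prop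
    | win {k : ℕ} {D S : Finset V} : StallerWinSet G S → StallD G k D S
    | move {k : ℕ} {D S : Finset V} : (∃ v : V, v ∉ D ∧ v ∉ S) →
        (∀ v : V, v ∉ D → v ∉ S → StallS G k (insert v D) S) → StallD G k D S
  /-- Like `StallD`, but it is Staller's turn to move. -/
  inductive StallS (G : SimpleGraph V) : ℕ → Finset V → Finset V → Prop
    | win {k : ℕ} {D S : Finset V} : StallerWinSet G S → StallS G k D S
    | move {k : ℕ} {D S : Finset V} (v : V) : v ∉ D → v ∉ S →
        StallD G k D (insert v S) → StallS G (k + 1) D S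
end

/-- Dominator has a winning strategy in the D-game (Dominator starts). -/
def DominatorWinsD (G : SimpleGraph V) : Prop := ∃ k, DomD G k ∅ ∅

/-- Dominator has a winning strategy in the S-game (Staller starts). -/
def DominatorWinsS (G : SimpleGraph V) : Prop := ∃ k, DomS G k ∅ ∅

/-- Staller has a winning strategy in the D-game (Dominator starts). -/
def StallerWinsD (G : SimpleGraph V) : Prop := ∃ k, StallD G k ∅ ∅

/-- Staller has a winning strategy in the S-game (Staller starts). -/
def StallerWinsS (G : SimpleGraph V) : Prop := ∃ k, StallS G k ∅ ∅

/-- Outcome `𝒟`: Dominator wins both the D-game and the S-game. -/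
def outcomeD (G : SimpleGraph V) : Prop := DominatorWinsD G ∧ DominatorWinsS G

/-- Outcome `𝒮`: Staller wins both the D-game and the S-game. -/
def outcomeS (G : SimpleGraph V) : Prop := StallerWinsD G ∧ StallerWinsS G

/-- Outcome `𝒩`: the first player wins in both games. -/
def outcomeN (G : SimpleGraph V) : Prop := DominatorWinsD G ∧ StallerWinsS G

/-- `γ_MB(G)`: the minimum number of Dominator's moves needed to win the D-game,
`∞` if he has no winning strategy. -/
noncomputable def gMB (G : SimpleGraph V) : ℕ∞ :=
  sInf ((fun k : ℕ => (k : ℕ∞)) '' {k | DomD G k ∅ ∅})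

/-- `γ_MB'(G)`: the minimum number of Dominator's moves needed to win the S-game. -/
noncomputable def gMB' (G : SimpleGraph V) : ℕ∞ :=
  sInf ((fun k : ℕ => (k : ℕ∞)) '' {k | DomS G k ∅ ∅})

/-- `γ_SMB(G)`: the minimum number of Staller's moves needed to win the D-game. -/
noncomputable def gSMB (G : SimpleGraph V) : ℕ∞ :=
  sInf ((fun k : ℕ => (k : ℕ∞)) '' {k | StallD G k ∅ ∅})

/-- `γ_SMB'(G)`: the minimum number of Staller's moves needed to win the S-game. -/
noncomputable def gSMB' (G : SimpleGraph V) : ℕ∞ :=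
  sInf ((fun k : ℕ => (k : ℕ∞)) '' {k | StallS G k ∅ ∅})

end MBD

/-!
Dominator answers a Staller move on a vertex of a pair of `M` with the other vertex of that pair,
and otherwise claims a vertex of any pair. Either way the pair leaves `M`, both of its vertices
enter `N[X]`, and the remaining pairs stay unclaimed; once `M` is empty, `X` dominates `G`.
-/

namespace MBD

variable {V : Type*} [DecidableEq V] {G : SimpleGraph V} {X Y : Finset V}
  {M : Finset (V × V)} {p q : V × V} {v w : V}

structure IsDominatingPairing (G : SimpleGraph V) (X Y : Finset V) (M : Finset (V × V)) :
    Prop where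
  adj : ∀ p ∈ M, G.Adj p.1 p.2
  avoid : ∀ p ∈ M, p.1 ∉ X ∪ Y ∧ p.2 ∉ X ∪ Y
  disj : ∀ p ∈ M, ∀ q ∈ M, p ≠ q → p.1 ≠ q.1 ∧ p.1 ≠ q.2 ∧ p.2 ≠ q.1 ∧ p.2 ≠ q.2
  cover : ∀ v : V, (∀ p ∈ M, v ≠ p.1 ∧ v ≠ p.2) → ∃ x ∈ X, x = v ∨ G.Adj x v

namespace IsDominatingPairing

variable (h : IsDominatingPairing G X Y M)
include h

theorem notMem_of_mem_pair (hp : p ∈ M) (hv : v = p.1 ∨ v = p.2) : v ∉ X ∧ v ∉ Y := by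
  have := h.avoid p hp
  simp only [Finset.mem_union, not_or] at this
  rcases hv with rfl | rfl
  exacts [this.1, this.2]

theorem notMem_pair_of_mem_erase (hq : q ∈ M) (hv : v = q.1 ∨ v = q.2) :
    ∀ r ∈ M.erase q, v ≠ r.1 ∧ v ≠ r.2 := by
  intro r hr
  have := h.disj r (Finset.mem_of_mem_erase hr) q hq (Finset.ne_of_mem_erase hr)
  rcases hv with rfl | rfl <;> exact ⟨by tauto, by tauto⟩

theorem exists_partner (hp : p ∈ M) (hv : v = p.1 ∨ v = p.2) :
    ∃ w, (w = p.1 ∨ w = p.2) ∧ G.Adj w v := by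
  rcases hv with rfl | rfl
  · exact ⟨p.2, Or.inr rfl, (h.adj p hp).symm⟩
  · exact ⟨p.1, Or.inl rfl, h.adj p hp⟩

theorem dominates_of_card_eq_zero (hM : M.card = 0) : Dominates G X := by
  obtain rfl := Finset.card_eq_zero.mp hM
  exact fun v => h.cover v (by simp)

theorem erase (hp : p ∈ M) (hw : w = p.1 ∨ w = p.2) :
    IsDominatingPairing G (insert w X) Y (M.erase p) where
  adj q hq := h.adj q (Finset.mem_of_mem_erase hq)
  avoid q hq := by
    have hne := h.notMem_pair_of_mem_erase hp hw q hq
    have := h.avoid q (Finset.mem_of_mem_erase hq)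
    simp only [Finset.mem_union, Finset.mem_insert, not_or] at this ⊢
    exact ⟨⟨⟨Ne.symm hne.1, this.1.1⟩, this.1.2⟩, ⟨Ne.symm hne.2, this.2.1⟩, this.2.2⟩
  disj q hq r hr :=
    h.disj q (Finset.mem_of_mem_erase hq) r (Finset.mem_of_mem_erase hr)
  cover u hu := by
    by_cases hup : u = p.1 ∨ u = p.2
    · refine ⟨w, Finset.mem_insert_self _ _, ?_⟩
      rcases hw with rfl | rfl <;> rcases hup with rfl | rfl
      exacts [Or.inl rfl, Or.inr (h.adj p hp), Or.inr (h.adj p hp).symm, Or.inl rfl]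
    · obtain ⟨x, hx, hxu⟩ := h.cover u fun r hr => by
        by_cases hrp : r = p
        · subst hrp; exact not_or.mp hup
        · exact hu r (Finset.mem_erase.mpr ⟨hrp, hr⟩)
      exact ⟨x, Finset.mem_insert_of_mem hx, hxu⟩

theorem insert_right (hv : ∀ q ∈ M, v ≠ q.1 ∧ v ≠ q.2) :
    IsDominatingPairing G X (insert v Y) M where
  adj := h.adj
  avoid q hq := by
    have := h.avoid q hq
    simp only [Finset.mem_union, Finset.mem_insert, not_or] at this ⊢
    exact ⟨⟨this.1.1, Ne.symm (hv q hq).1, this.1.2⟩, this.2.1, Ne.symm (hv q hq).2, this.2.2⟩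
  disj := h.disj
  cover := h.cover

omit h

theorem domD_and_domS : ∀ {n : ℕ} {X Y : Finset V} {M : Finset (V × V)},
    IsDominatingPairing G X Y M → M.card = n → DomD G n X Y ∧ DomS G n X Y
  | 0, _, _, _, h, hM =>
    ⟨.win (h.dominates_of_card_eq_zero hM), .win (h.dominates_of_card_eq_zero hM)⟩
  | n + 1, X, Y, M, h, hM => by
    have ih : ∀ {X' Y' p}, p ∈ M → IsDominatingPairing G X' Y' (M.erase p) → DomS G n X' Y' :=
      fun hp h' => (domD_and_domS h' (by rw [Finset.card_erase_of_mem hp, hM]; rfl)).2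
    obtain ⟨p, hp⟩ := (Finset.card_pos (s := M)).mp (by omega)
    have domD : ∀ {Y'}, IsDominatingPairing G X Y' M → DomD G (n + 1) X Y' := fun h' => by
      obtain ⟨hpX, hpY⟩ := h'.notMem_of_mem_pair hp (Or.inl rfl)
      exact .move p.1 hpX hpY (ih hp (h'.erase hp (Or.inl rfl)))
    refine ⟨domD h, .move ⟨p.1, h.notMem_of_mem_pair hp (Or.inl rfl)⟩ fun v _ _ => ?_⟩
    by_cases hv : ∃ q ∈ M, v = q.1 ∨ v = q.2
    · obtain ⟨q, hq, hvq⟩ := hv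
      obtain ⟨w, hwq, hwv⟩ := h.exists_partner hq hvq
      obtain ⟨hwX, hwY⟩ := h.notMem_of_mem_pair hq hwq
      exact .move w hwX (by simp [hwv.ne, hwY])
        (ih hq ((h.erase hq hwq).insert_right (h.notMem_pair_of_mem_erase hq hvq)))
    · push Not at hv
      exact domD (h.insert_right hv)

end IsDominatingPairing

end MBD

/-- Generalized pairing lemma: if at some moment Dominator has claimed `X` and Staller
`Y`, and there is a matching `M` of `G` avoiding `X ∪ Y` such that every vertex not
covered by `M` lies in `N_G[X]`, then Dominator wins the continuation of the game no
matter who moves next, using at most `|M|` further moves (hence `|X| + |M|` moves in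
total). -/
theorem stmt_3 {V : Type*} [Fintype V] [DecidableEq V] (G : SimpleGraph V)
    (X Y : Finset V) (hXY : Disjoint X Y)
    (M : Finset (V × V))
    (hadj : ∀ p ∈ M, G.Adj p.1 p.2)
    (havoid : ∀ p ∈ M, p.1 ∉ X ∪ Y ∧ p.2 ∉ X ∪ Y)
    (hdisj : ∀ p ∈ M, ∀ q ∈ M, p ≠ q →
      p.1 ≠ q.1 ∧ p.1 ≠ q.2 ∧ p.2 ≠ q.1 ∧ p.2 ≠ q.2)
    (hcover : ∀ v : V, (∀ p ∈ M, v ≠ p.1 ∧ v ≠ p.2) → ∃ x ∈ X, x = v ∨ G.Adj x v) :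
    MBD.DomD G M.card X Y ∧ MBD.DomS G M.card X Y :=
  MBD.IsDominatingPairing.domD_and_domS ⟨hadj, havoid, hdisj, hcover⟩ rfl
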